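/- arXiv:2401.06534 — 3 statements merged into one kernel-verified Lean document; each statement's English description precedes it below -/
import Mathlib

section
/- Let β : ℤ → ℝ be a nonnegative c-self-controlled sequence with β ⋆ β ≤ Cβ and β_0 > 0, and let θ : ℤ×ℤ → ℝ be nonnegative with θ_{hk} ≤ K·β_h β_k for all h,k and some K > 0. Define d_{hk} = β_h β_k + θ_{hk}. Then there is a constant C' > 0 (depending only on C, K, β_0 and ‖β‖_{ℓ¹}) such that ∑_{j∈ℤ} d_{j,0}·d_{h−j,k} ≤ C'·β_h β_k for all h, k ∈ ℤ. -/
/-!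
Since `0 ≤ θ_{hk} ≤ K β_h β_k`, the kernel `d_{hk} = β_h β_k + θ_{hk}` is squeezed between
`0` and `(1 + K) β_h β_k`. Hence each term of the convolution is at most
`(1 + K)² β_0 β_k · β_j β_{h-j}`, and summing over `j` with `β ⋆ β ≤ C β` gives the bound
with `C' = (1 + K)² β_0 C`.
-/

lemma tsum_le_mul_tsum_of_le_mul {ι : Type*} {f g : ι → ℝ} {c : ℝ} (hf : ∀ i, 0 ≤ f i)
    (hfg : ∀ i, f i ≤ c * g i) (hg : Summable g) : ∑' i, f i ≤ c * ∑' i, g i := by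
  have hcg : Summable fun i => c * g i := hg.mul_left c
  rw [← tsum_mul_left]
  exact (hcg.of_nonneg_of_le hf hfg).tsum_le_tsum hfg hcg

section PerturbedProduct

variable {ι : Type*} (β : ι → ℝ) (θ : ι → ι → ℝ)

def perturbedProduct (h k : ι) : ℝ := β h * β k + θ h k

variable {β θ} {K : ℝ}

lemma perturbedProduct_nonneg (hβ : ∀ i, 0 ≤ β i) (hθ : ∀ h k, 0 ≤ θ h k) (h k : ι) :
    0 ≤ perturbedProduct β θ h k :=
  add_nonneg (mul_nonneg (hβ h) (hβ k)) (hθ h k)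

lemma perturbedProduct_le (hθ : ∀ h k, θ h k ≤ K * (β h * β k)) (h k : ι) :
    perturbedProduct β θ h k ≤ (1 + K) * (β h * β k) := by
  unfold perturbedProduct
  linarith [hθ h k]

lemma perturbedProduct_mul_le (hβ : ∀ i, 0 ≤ β i) (hθnn : ∀ h k, 0 ≤ θ h k)
    (hθ : ∀ h k, θ h k ≤ K * (β h * β k)) (h k h' k' : ι) :
    perturbedProduct β θ h k * perturbedProduct β θ h' k'
      ≤ (1 + K) ^ 2 * (β h * β k) * (β h' * β k') :=
  calc perturbedProduct β θ h k * perturbedProduct β θ h' k'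
      ≤ ((1 + K) * (β h * β k)) * ((1 + K) * (β h' * β k')) :=
        mul_le_mul (perturbedProduct_le hθ h k) (perturbedProduct_le hθ h' k')
          (perturbedProduct_nonneg hβ hθnn h' k')
          ((perturbedProduct_nonneg hβ hθnn h k).trans (perturbedProduct_le hθ h k))
    _ = (1 + K) ^ 2 * (β h * β k) * (β h' * β k') := by ring

end PerturbedProduct

theorem stmt7_general (β : ℤ → ℝ) (C K : ℝ) (hC : 0 < C) (hK : 0 < K)
    (hnn : ∀ i, 0 ≤ β i) (hβ0 : 0 < β 0)
    (hsum : ∀ i : ℤ, Summable (fun j : ℤ => β j * β (i - j)))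
    (hsc : ∀ i : ℤ, (∑' j : ℤ, β j * β (i - j)) ≤ C * β i)
    (θ : ℤ → ℤ → ℝ) (hθnn : ∀ h k, 0 ≤ θ h k) (hθ : ∀ h k, θ h k ≤ K * (β h * β k)) :
    ∃ C' > (0:ℝ), ∀ h k : ℤ,
      (∑' j : ℤ, (β j * β 0 + θ j 0) * (β (h - j) * β k + θ (h - j) k))
        ≤ C' * (β h * β k) := by
  refine ⟨(1 + K) ^ 2 * β 0 * C, by positivity, fun h k => ?_⟩
  have hcoef : 0 ≤ (1 + K) ^ 2 * β 0 * β k := by have := hnn k; positivity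
  have hterm (j : ℤ) : perturbedProduct β θ j 0 * perturbedProduct β θ (h - j) k
      ≤ ((1 + K) ^ 2 * β 0 * β k) * (β j * β (h - j)) :=
    (perturbedProduct_mul_le hnn hθnn hθ j 0 (h - j) k).trans_eq (by ring)
  calc (∑' j : ℤ, perturbedProduct β θ j 0 * perturbedProduct β θ (h - j) k)
      ≤ ((1 + K) ^ 2 * β 0 * β k) * ∑' j : ℤ, β j * β (h - j) :=
        tsum_le_mul_tsum_of_le_mul
          (fun j => mul_nonneg (perturbedProduct_nonneg hnn hθnn j 0)
            (perturbedProduct_nonneg hnn hθnn (h - j) k))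
          hterm (hsum h)
    _ ≤ ((1 + K) ^ 2 * β 0 * β k) * (C * β h) := mul_le_mul_of_nonneg_left (hsc h) hcoef
    _ = (1 + K) ^ 2 * β 0 * C * (β h * β k) := by ring

theorem stmt7 (β : ℤ → ℝ) (C K : ℝ) (hC : 0 < C) (hK : 0 < K)
    (hnn : ∀ i, 0 ≤ β i) (hβ0 : 0 < β 0)
    (hl1 : Summable β)
    (hsum : ∀ i : ℤ, Summable (fun j : ℤ => β j * β (i - j)))
    (hsc : ∀ i : ℤ, (∑' j : ℤ, β j * β (i - j)) ≤ C * β i)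
    (θ : ℤ → ℤ → ℝ) (hθnn : ∀ h k, 0 ≤ θ h k) (hθ : ∀ h k, θ h k ≤ K * (β h * β k)) :
    ∃ C' > (0:ℝ), ∀ h k : ℤ,
      (∑' j : ℤ, (β j * β 0 + θ j 0) * (β (h - j) * β k + θ (h - j) k))
        ≤ C' * (β h * β k) :=
  stmt7_general β C K hC hK hnn hβ0 hsum hsc θ hθnn hθ
end

section
/- Let N ∈ ℕ, M ∈ ℝ, and let c : [0,T) → (Sym(N))^N be an absolutely continuous solution of the system ċ^i − (c^i)ᵀE^i c^i + B(c)ᵀc^i + c^i B(c) = f^i, c^i(0) = g^i, with B(c)(t) ≥ −M·I for all t ∈ [0,T). Assume ∑_{h,k: k≠i} |f^i_{hk}(t)|² ≤ κ_f/N and ∑_{h,k: k≠i} |g^i_{hk}|² ≤ κ_g/N for all i. Then for all t ∈ [0,T) and all i: ∑_{h,k: k≠i} |c^i_{hk}(t)|² ≤ (κ_g + κ_f·t)·e^{(1+4M₊)t}/N, where M₊ = max(M, 0). -/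
/-!
Fix `i` and let `φ(t) = ∑_{h, k ≠ i} (c^i_{hk})²` be the squared Frobenius norm of `c^i` with its
`i`-th column deleted. Row `i` of `B(c)` is row `i` of `c^i`, so by symmetry of `c^i` the
quadratic term `(c^i)ᵀ E^i c^i` is exactly the `i`-th column's share of `c^i B(c)`; what is left
of `c^i B(c)` is `Q B(c)`, with `Q` the matrix `c^i` with column `i` deleted. Pairing the equation
with `Q`, the term `Q B(c)` contributes `−∑_h Q_h B(c) Q_hᵀ` (a sum over the rows of `Q`) and
`B(c)ᵀ c^i` contributes `−∑_{k ≠ i} c^i_{·k}ᵀ B(c) c^i_{·k}` (a sum over the columns), both at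
most `M₊ φ` by `B(c) ≥ −M·I`; Young's inequality bounds the forcing term. Hence
`φ' ≤ (1 + 4M₊) φ + κ_f / N`, and Grönwall's inequality gives the bound.
-/

open Matrix Real Set Finset

section

variable {n : Type*} [Fintype n]

theorem Matrix.dotProduct_mul_apply {m : Type*} (A : Matrix m n ℝ) (B : Matrix n n ℝ) (h : m) :
    A h ⬝ᵥ (A * B) h = A h ⬝ᵥ B *ᵥ A h := by
  rw [mul_apply_eq_vecMul, dotProduct_mulVec, dotProduct_comm]

theorem neg_sum_dotProduct_mulVec_le {ι : Type*} {B : Matrix n n ℝ} {m : ℝ}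
    (hB : ∀ v, -m * ∑ j, v j ^ 2 ≤ v ⬝ᵥ B *ᵥ v) (s : Finset ι) (v : ι → n → ℝ) :
    -∑ a ∈ s, v a ⬝ᵥ B *ᵥ v a ≤ m * ∑ a ∈ s, v a ⬝ᵥ v a := by
  rw [← sum_neg_distrib, mul_sum]
  refine sum_le_sum fun a _ => ?_
  have hsq : v a ⬝ᵥ v a = ∑ j, v a j ^ 2 := by simp only [dotProduct, sq]
  rw [hsq]
  linarith [hB (v a)]

variable [DecidableEq n]

theorem Matrix.transpose_mul_single_mul_sub_mul {C B : Matrix n n ℝ} (i : n) (hC : Cᵀ = C)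
    (hBC : B i = C i) : Cᵀ * single i i 1 * C - C * B = -(C.updateCol i 0 * B) := by
  have hsplit : C = C.updateCol i 0 + C * single i i 1 := by
    ext h k
    by_cases hk : k = i <;> simp [mul_single_eq_updateCol_zero, hk]
  have hrow : single i i (1 : ℝ) * B = single i i 1 * C := by
    rw [single_mul_eq_updateRow_zero, single_mul_eq_updateRow_zero]
    exact congrArg (fun r => updateRow 0 i ((1 : ℝ) • r)) hBC
  conv_lhs => rw [hC, mul_assoc, ← hrow]; enter [2, 1]; rw [hsplit]
  rw [add_mul, mul_assoc]
  abel

def offColInner (i : n) (X Y : Matrix n n ℝ) : ℝ :=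
  ∑ h, ∑ k, if k = i then 0 else X h k * Y h k

namespace offColInner

variable (i : n) (X Y Z : Matrix n n ℝ)

theorem self_eq_sum_sq : offColInner i X X = ∑ h, ∑ k, if k = i then 0 else X h k ^ 2 := by
  simp only [offColInner, sq]

theorem self_nonneg : 0 ≤ offColInner i X X :=
  sum_nonneg fun _ _ => sum_nonneg fun _ _ => by split_ifs <;> nlinarith

theorem sub_right : offColInner i X (Y - Z) = offColInner i X Y - offColInner i X Z := by
  simp only [offColInner, ← sum_sub_distrib, Matrix.sub_apply]
  refine sum_congr rfl fun _ _ => sum_congr rfl fun _ _ => ?_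
  split_ifs <;> ring

theorem eq_sum_row : offColInner i X Y = ∑ h, X.updateCol i 0 h ⬝ᵥ Y h := by
  simp only [offColInner, dotProduct, updateCol_apply, Pi.zero_apply, ite_mul, zero_mul]

theorem self_eq_sum_row :
    offColInner i X X = ∑ h, X.updateCol i 0 h ⬝ᵥ X.updateCol i 0 h := by
  simp only [offColInner, dotProduct, updateCol_apply, Pi.zero_apply]
  refine sum_congr rfl fun _ _ => sum_congr rfl fun _ _ => ?_
  split_ifs <;> simp

theorem eq_sum_col : offColInner i X Y = ∑ k ∈ univ.erase i, Xᵀ k ⬝ᵥ Yᵀ k := by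
  rw [offColInner, sum_comm, ← sum_erase_add _ _ (mem_univ i)]
  simp only [if_true, sum_const_zero, add_zero]
  exact sum_congr rfl fun k hk => by simp [if_neg (ne_of_mem_erase hk), dotProduct]

theorem two_mul_le : 2 * offColInner i X Y ≤ offColInner i X X + offColInner i Y Y := by
  simp only [offColInner, mul_sum, ← sum_add_distrib]
  refine sum_le_sum fun h _ => sum_le_sum fun k _ => ?_
  split_ifs
  · simp
  · nlinarith [two_mul_le_add_sq (X h k) (Y h k)]

theorem hasDerivAt_self {X : ℝ → Matrix n n ℝ} {X' : Matrix n n ℝ} {t : ℝ}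
    (hX : ∀ h k, HasDerivAt (fun s => X s h k) (X' h k) t) :
    HasDerivAt (fun s => offColInner i (X s) (X s)) (2 * offColInner i (X t) X') t := by
  simp only [offColInner, mul_sum]
  refine HasDerivAt.fun_sum fun h _ => HasDerivAt.fun_sum fun k _ => ?_
  split_ifs
  · simpa using hasDerivAt_const t (0 : ℝ)
  · exact ((hX h k).mul (hX h k)).congr_deriv (by ring)

end offColInner

theorem two_mul_offColInner_riccati_le (i : n) {C B F : Matrix n n ℝ} {m : ℝ} (hC : Cᵀ = C)
    (hB : ∀ v, -m * ∑ j, v j ^ 2 ≤ v ⬝ᵥ B *ᵥ v) (hBC : B i = C i) :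
    2 * offColInner i C (F + Cᵀ * single i i 1 * C - Bᵀ * C - C * B)
      ≤ (1 + 4 * m) * offColInner i C C + offColInner i F F := by
  set Q := C.updateCol i 0
  have hsplit : F + Cᵀ * single i i 1 * C - Bᵀ * C - C * B = F - Bᵀ * C - Q * B := by
    rw [← neg_neg (Q * B), ← transpose_mul_single_mul_sub_mul i hC hBC]
    abel
  have hrows : -offColInner i C (Q * B) ≤ m * offColInner i C C := by
    rw [offColInner.eq_sum_row, offColInner.self_eq_sum_row,
      sum_congr rfl fun h _ => dotProduct_mul_apply Q B h]
    exact neg_sum_dotProduct_mulVec_le hB _ _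
  have hcols : -offColInner i C (Bᵀ * C) ≤ m * offColInner i C C := by
    rw [offColInner.eq_sum_col, offColInner.eq_sum_col i C C, transpose_mul, transpose_transpose,
      sum_congr rfl fun k _ => dotProduct_mul_apply Cᵀ B k]
    exact neg_sum_dotProduct_mulVec_le hB _ _
  have hF := offColInner.two_mul_le i C F
  rw [hsplit, offColInner.sub_right, offColInner.sub_right]
  linarith

end

theorem gronwallBound_le_mul_exp {δ K ε : ℝ} (hK : 0 ≤ K) (hε : 0 ≤ ε) (x : ℝ) :
    gronwallBound δ K ε x ≤ (δ + ε * x) * exp (K * x) := by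
  rcases hK.eq_or_lt with rfl | hK
  · simp [gronwallBound_K0]
  · rw [gronwallBound_of_K_ne_0 hK.ne']
    have hexp : exp (K * x) - 1 ≤ K * x * exp (K * x) := by
      have := mul_le_mul_of_nonneg_left (add_one_le_exp (-(K * x))) (exp_pos (K * x)).le
      rw [← exp_add, add_neg_cancel, exp_zero] at this
      linarith
    have : ε / K * (exp (K * x) - 1) ≤ ε * x * exp (K * x) :=
      calc ε / K * (exp (K * x) - 1) ≤ ε / K * (K * x * exp (K * x)) := by gcongr
        _ = ε * x * exp (K * x) := by field_simp
    linarith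

theorem le_mul_exp_of_hasDerivAt_le {φ φ' : ℝ → ℝ} {a b δ K ε : ℝ} (hK : 0 ≤ K) (hε : 0 ≤ ε)
    (hφ : ∀ s ∈ Ico a b, HasDerivAt φ (φ' s) s) (ha : φ a ≤ δ)
    (hbound : ∀ s ∈ Ico a b, φ' s ≤ K * φ s + ε) {t : ℝ} (ht : t ∈ Ico a b) :
    φ t ≤ (δ + ε * (t - a)) * exp (K * (t - a)) := by
  have hIcc : Icc a t ⊆ Ico a b := Icc_subset_Ico_right ht.2
  have hIco : Ico a t ⊆ Ico a b := Ico_subset_Ico_right ht.2.le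
  refine (le_gronwallBound_of_liminf_deriv_right_le (f' := φ')
    (fun s hs => (hφ s (hIcc hs)).continuousAt.continuousWithinAt)
    (fun s hs _ hr => (hφ s (hIco hs)).hasDerivWithinAt.liminf_right_slope_le hr)
    ha (fun s hs => hbound s (hIco hs)) t ⟨ht.1, le_rfl⟩).trans ?_
  exact gronwallBound_le_mul_exp hK hε _

theorem stmt18_general (N : ℕ) (T : ℝ) (M : ℝ)
    (κf κg : ℝ)
    (f : ℝ → Fin N → Matrix (Fin N) (Fin N) ℝ)
    (g : Fin N → Matrix (Fin N) (Fin N) ℝ)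
    (c : ℝ → Fin N → Matrix (Fin N) (Fin N) ℝ)
    (hcsym : ∀ t i, (c t i)ᵀ = c t i)
    -- `c` solves `ċ^i − (c^i)ᵀ E^i c^i + B(c)ᵀ c^i + c^i B(c) = f^i` entrywise on `[0,T)`
    (hODE : ∀ i : Fin N, ∀ t ∈ Set.Ico (0:ℝ) T, ∀ h k : Fin N,
      HasDerivAt (fun s => c s i h k)
        (((f t i + (c t i)ᵀ * (Matrix.single i i 1) * c t i
          - (Matrix.of (fun p q : Fin N => c t p p q))ᵀ * c t i
          - c t i * (Matrix.of (fun p q : Fin N => c t p p q))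
          : Matrix (Fin N) (Fin N) ℝ)) h k) t)
    (hinit : ∀ i, c 0 i = g i)
    -- `B(c)(t) ≥ −M·I` in the quadratic-form sense
    (hB : ∀ t ∈ Set.Ico (0:ℝ) T, ∀ v : Fin N → ℝ,
      -M * (∑ i, (v i)^2) ≤ v ⬝ᵥ ((Matrix.of (fun p q : Fin N => c t p p q)).mulVec v))
    (hf : ∀ t ∈ Set.Ico (0:ℝ) T, ∀ i : Fin N,
      (∑ h : Fin N, ∑ k : Fin N, if k = i then 0 else (f t i h k)^2) ≤ κf / N)
    (hg : ∀ i : Fin N,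
      (∑ h : Fin N, ∑ k : Fin N, if k = i then 0 else (g i h k)^2) ≤ κg / N) :
    ∀ t ∈ Set.Ico (0:ℝ) T, ∀ i : Fin N,
      (∑ h : Fin N, ∑ k : Fin N, if k = i then 0 else (c t i h k)^2)
        ≤ (κg + κf * t) * Real.exp ((1 + 4 * max M 0) * t) / N := by
  intro t ht i
  have hBmax : ∀ s ∈ Ico 0 T, ∀ v : Fin N → ℝ,
      -max M 0 * ∑ j, v j ^ 2 ≤ v ⬝ᵥ (of fun p q => c s p p q) *ᵥ v := fun s hs v =>
    (mul_le_mul_of_nonneg_right (neg_le_neg (le_max_left M 0)) (by positivity)).trans (hB s hs v)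
  have hε : 0 ≤ κf / N := (offColInner.self_nonneg i (f t i)).trans <| by
    rw [offColInner.self_eq_sum_sq]
    exact hf t ht i
  have key := le_mul_exp_of_hasDerivAt_le (δ := κg / N) (K := 1 + 4 * max M 0) (by positivity) hε
    (fun s hs => offColInner.hasDerivAt_self i (hODE i s hs))
    (by rw [offColInner.self_eq_sum_sq, hinit]; exact hg i)
    (fun s hs => (two_mul_offColInner_riccati_le i (hcsym s i) (hBmax s hs) rfl).trans <| by
      rw [offColInner.self_eq_sum_sq i (f s i)]
      linarith [hf s hs i])
    ht
  rw [offColInner.self_eq_sum_sq, sub_zero] at key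
  calc _ ≤ (κg / N + κf / N * t) * exp ((1 + 4 * max M 0) * t) := key
    _ = _ := by ring

theorem stmt18 (N : ℕ) (hN : 0 < N) (T : ℝ) (hT : 0 < T) (M : ℝ)
    (κf κg : ℝ)
    (f : ℝ → Fin N → Matrix (Fin N) (Fin N) ℝ)
    (g : Fin N → Matrix (Fin N) (Fin N) ℝ)
    (c : ℝ → Fin N → Matrix (Fin N) (Fin N) ℝ)
    (hfsym : ∀ t i, (f t i)ᵀ = f t i)
    (hgsym : ∀ i, (g i)ᵀ = g i)
    (hcsym : ∀ t i, (c t i)ᵀ = c t i)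
    -- `c` solves `ċ^i − (c^i)ᵀ E^i c^i + B(c)ᵀ c^i + c^i B(c) = f^i` entrywise on `[0,T)`
    (hODE : ∀ i : Fin N, ∀ t ∈ Set.Ico (0:ℝ) T, ∀ h k : Fin N,
      HasDerivAt (fun s => c s i h k)
        (((f t i + (c t i)ᵀ * (Matrix.single i i 1) * c t i
          - (Matrix.of (fun p q : Fin N => c t p p q))ᵀ * c t i
          - c t i * (Matrix.of (fun p q : Fin N => c t p p q))
          : Matrix (Fin N) (Fin N) ℝ)) h k) t)
    (hinit : ∀ i, c 0 i = g i)
    -- `B(c)(t) ≥ −M·I` in the quadratic-form sense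
    (hB : ∀ t ∈ Set.Ico (0:ℝ) T, ∀ v : Fin N → ℝ,
      -M * (∑ i, (v i)^2) ≤ v ⬝ᵥ ((Matrix.of (fun p q : Fin N => c t p p q)).mulVec v))
    (hf : ∀ t ∈ Set.Ico (0:ℝ) T, ∀ i : Fin N,
      (∑ h : Fin N, ∑ k : Fin N, if k = i then 0 else (f t i h k)^2) ≤ κf / N)
    (hg : ∀ i : Fin N,
      (∑ h : Fin N, ∑ k : Fin N, if k = i then 0 else (g i h k)^2) ≤ κg / N) :
    ∀ t ∈ Set.Ico (0:ℝ) T, ∀ i : Fin N,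
      (∑ h : Fin N, ∑ k : Fin N, if k = i then 0 else (c t i h k)^2)
        ≤ (κg + κf * t) * Real.exp ((1 + 4 * max M 0) * t) / N :=
  stmt18_general N T M κf κg f g c hcsym hODE hinit hB hf hg
end

section
/- Suppose a scalar absolutely continuous function y : [0,T) → ℝ satisfies y(0) ≤ κ_g N^{−1} and y(t) ≤ (κ_g + κ_f t)N^{−1} + ∫₀ᵗ (1 + 4M₊ + 2√(κ₀(s)))·y(s) ds for all t ∈ [0,T), where κ₀(t) = (κ_g + κ_f t)e^{(1+4M₊)t}. Then y(t) ≤ 2κ₀(t)·e^{2∫₀ᵗ √(κ₀(s)) ds}·N^{−1} for all t ∈ [0,T). -/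
/-!
Integral form of Grönwall's inequality with a nondecreasing forcing term `b`: for fixed `t`,
`s ↦ (b t + ∫_{t₀}^s a y) e^{-∫_{t₀}^s a}` is nonincreasing on `[t₀, t]`, because its derivative is
`a e^{-A} (y - b t - ∫ a y) ≤ 0`. Comparing its values at `t₀` and `t` gives
`y t ≤ b t e^{∫ a}`. With `b t = (κ_g + κ_f t)/N` and `a = 1 + 4M₊ + 2√κ₀` the right-hand side
is exactly `κ₀(t) e^{2∫√κ₀} / N`, so the factor `2` in the claimed bound is slack.
-/

open Real intervalIntegral Set

section Primitive

variable {f : ℝ → ℝ} {t₀ T : ℝ}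

theorem hasDerivAt_integral_of_continuousOn_Icc (hf : ContinuousOn f (Icc t₀ T)) {s : ℝ}
    (hs : s ∈ Ioo t₀ T) : HasDerivAt (fun u => ∫ x in t₀..u, f x) (f s) s := by
  refine integral_hasDerivAt_right ?_
    (hf.stronglyMeasurableAtFilter_nhdsWithin measurableSet_Icc s |>.filter_mono ?_)
    (hf.continuousAt (Icc_mem_nhds hs.1 hs.2))
  · exact (hf.mono (uIcc_of_le hs.1.le ▸ Icc_subset_Icc_right hs.2.le)).intervalIntegrable
  · exact le_inf le_rfl (Filter.le_principal_iff.2 (Icc_mem_nhds hs.1 hs.2))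

theorem continuousOn_integral_of_continuousOn_Icc (hf : ContinuousOn f (Icc t₀ T)) :
    ContinuousOn (fun u => ∫ x in t₀..u, f x) (Icc t₀ T) := by
  rcases le_or_gt t₀ T with h | h
  · rw [← uIcc_of_le h] at hf ⊢
    exact continuousOn_primitive_interval (hf.integrableOn_compact isCompact_uIcc)
  · simp [Icc_eq_empty_of_lt h]

end Primitive

theorem le_mul_exp_integral_of_le_add_integral {a b y : ℝ → ℝ} {t₀ T : ℝ}
    (ha : ContinuousOn a (Icc t₀ T)) (ha₀ : ∀ s ∈ Icc t₀ T, 0 ≤ a s)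
    (hy : ContinuousOn y (Icc t₀ T)) (hb : MonotoneOn b (Ico t₀ T))
    (hyb : ∀ t ∈ Ico t₀ T, y t ≤ b t + ∫ s in t₀..t, a s * y s) :
    ∀ t ∈ Ico t₀ T, y t ≤ b t * exp (∫ s in t₀..t, a s) := by
  intro t ht
  set A := fun u => ∫ s in t₀..u, a s
  set Y := fun u => ∫ s in t₀..u, a s * y s
  have hsub : Icc t₀ t ⊆ Icc t₀ T := Icc_subset_Icc_right ht.2.le
  have hay : ContinuousOn (fun s => a s * y s) (Icc t₀ T) := ha.mul hy
  have hdecr : AntitoneOn (fun u => (b t + Y u) * exp (-A u)) (Icc t₀ t) := by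
    refine antitoneOn_of_hasDerivWithinAt_nonpos (convex_Icc t₀ t)
      (f' := fun s => a s * exp (-A s) * (y s - (b t + Y s))) ?_ ?_ ?_
    · exact ((continuousOn_const.add (continuousOn_integral_of_continuousOn_Icc hay)).mul
        (continuousOn_integral_of_continuousOn_Icc ha).neg.rexp).mono hsub
    · intro s hs
      rw [interior_Icc] at hs
      have hsT : s ∈ Ioo t₀ T := ⟨hs.1, hs.2.trans ht.2⟩
      have hY := (hasDerivAt_integral_of_continuousOn_Icc hay hsT).const_add (b t)
      have hA := (hasDerivAt_integral_of_continuousOn_Icc ha hsT).neg.exp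
      exact ((hY.mul hA).congr_deriv (by simp only [Pi.neg_apply]; ring)).hasDerivWithinAt
    · intro s hs
      rw [interior_Icc] at hs
      have hys : y s ≤ b t + Y s :=
        (hyb s ⟨hs.1.le, hs.2.trans ht.2⟩).trans <| add_le_add_left
          (hb ⟨hs.1.le, hs.2.trans ht.2⟩ ht hs.2.le) _
      exact mul_nonpos_of_nonneg_of_nonpos
        (mul_nonneg (ha₀ s ⟨hs.1.le, hs.2.le.trans ht.2.le⟩) (exp_pos _).le) (by linarith)
  have hend : (b t + Y t) * exp (-A t) ≤ b t := by
    simpa [A, Y] using hdecr (left_mem_Icc.2 ht.1) (right_mem_Icc.2 ht.1) ht.1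
  calc y t ≤ b t + Y t := hyb t ht
    _ = (b t + Y t) * exp (-A t) * exp (A t) := by rw [mul_assoc, ← exp_add]; simp
    _ ≤ b t * exp (A t) := mul_le_mul_of_nonneg_right hend (exp_pos _).le

theorem stmt19_general (T : ℝ) (κf κg Mp : ℝ) (N : ℝ)
    (hκf : 0 ≤ κf) (hκg : 0 ≤ κg) (hMp : 0 ≤ Mp) (hN : 1 ≤ N)
    (y : ℝ → ℝ) (hy : ContinuousOn y (Set.Icc 0 T))
    (κ0 : ℝ → ℝ) (hκ0 : ∀ t, κ0 t = (κg + κf * t) * Real.exp ((1 + 4 * Mp) * t))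
    (hint : ∀ t ∈ Set.Ico (0:ℝ) T,
      y t ≤ (κg + κf * t) / N +
        ∫ s in (0:ℝ)..t, (1 + 4 * Mp + 2 * Real.sqrt (κ0 s)) * y s) :
    ∀ t ∈ Set.Ico (0:ℝ) T,
      y t ≤ 2 * κ0 t * Real.exp (2 * ∫ s in (0:ℝ)..t, Real.sqrt (κ0 s)) / N := by
  intro t ht
  have hN₀ : 0 < N := one_pos.trans_le hN
  have hsqrt : Continuous fun s => √(κ0 s) := by
    rw [show κ0 = _ from funext hκ0]; fun_prop
  have hgron := le_mul_exp_integral_of_le_add_integral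
    (a := fun s => 1 + 4 * Mp + 2 * √(κ0 s)) (b := fun s => (κg + κf * s) / N)
    (continuous_const.add (continuous_const.mul hsqrt)).continuousOn
    (fun s _ => add_nonneg (by linarith) (by positivity)) hy
    (fun s _ u _ hsu => div_le_div_of_nonneg_right (by gcongr) hN₀.le) hint t ht
  have hA : ∫ s in (0:ℝ)..t, (1 + 4 * Mp + 2 * √(κ0 s)) =
      (1 + 4 * Mp) * t + 2 * ∫ s in (0:ℝ)..t, √(κ0 s) := by
    rw [integral_add intervalIntegrable_const ((hsqrt.intervalIntegrable 0 t).const_mul 2),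
      integral_const, integral_const_mul, smul_eq_mul, sub_zero, mul_comm]
  have hκ0t : 0 ≤ κ0 t * exp (2 * ∫ s in (0:ℝ)..t, √(κ0 s)) / N := by
    rw [hκ0]; have := ht.1; positivity
  calc y t ≤ κ0 t * exp (2 * ∫ s in (0:ℝ)..t, √(κ0 s)) / N := by
        rw [hA, exp_add] at hgron; rw [hκ0]; convert hgron using 1; ring
    _ ≤ 2 * (κ0 t * exp (2 * ∫ s in (0:ℝ)..t, √(κ0 s)) / N) := by linarith
    _ = _ := by ring

theorem stmt19 (T : ℝ) (hT : 0 < T) (κf κg Mp : ℝ) (N : ℝ)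
    (hκf : 0 ≤ κf) (hκg : 0 ≤ κg) (hMp : 0 ≤ Mp) (hN : 1 ≤ N)
    (y : ℝ → ℝ) (hy : ContinuousOn y (Set.Icc 0 T))
    (κ0 : ℝ → ℝ) (hκ0 : ∀ t, κ0 t = (κg + κf * t) * Real.exp ((1 + 4 * Mp) * t))
    (h0 : y 0 ≤ κg / N)
    (hint : ∀ t ∈ Set.Ico (0:ℝ) T,
      y t ≤ (κg + κf * t) / N +
        ∫ s in (0:ℝ)..t, (1 + 4 * Mp + 2 * Real.sqrt (κ0 s)) * y s) :
    ∀ t ∈ Set.Ico (0:ℝ) T,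
      y t ≤ 2 * κ0 t * Real.exp (2 * ∫ s in (0:ℝ)..t, Real.sqrt (κ0 s)) / N :=
  stmt19_general T κf κg Mp N hκf hκg hMp hN y hy κ0 hκ0 hint
end
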